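/- In the simplified dictionary-LASSO setting with the block partition, writing W_{Xh,1} = ρ⁻_{X,Z⁺}(s+l) and W_{Xh,2} = 6·σ_min(Z)⁻¹·ρ⁺_{X,Z⁺}(s+l)·√(s/l), one has ‖Xh‖² ≥ W_{Xh,1}·‖Z⁺(Zh)_{T₀₁}‖² − W_{Xh,2}·‖Z⁺(Zh)_{T₀₁}‖·‖(Zh)_{T₀₁}‖, where T₀₁ = T₀ ∪ T₁. -/

import Mathlib

open scoped BigOperators
open Matrix MeasureTheory ProbabilityTheory

/-- Euclidean norm of a vector in `ℝ^n`. -/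
noncomputable def vnorm {n : ℕ} (v : Fin n → ℝ) : ℝ := Real.sqrt (∑ i, v i ^ 2)

/-- ℓ¹ norm. -/
noncomputable def vnorm1 {n : ℕ} (v : Fin n → ℝ) : ℝ := ∑ i, |v i|

/-- ℓ∞ norm. -/
noncomputable def vnormInf {n : ℕ} (v : Fin n → ℝ) : ℝ := ⨆ i, |v i|

/-- Restriction of a vector to an index set: coordinates outside `T` are set to zero. -/
noncomputable def restr {m : ℕ} (T : Finset (Fin m)) (w : Fin m → ℝ) : Fin m → ℝ :=
  fun i => if i ∈ T then w i else 0

/-- Support of a vector. -/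
noncomputable def suppSet {m : ℕ} (w : Fin m → ℝ) : Finset (Fin m) :=
  Finset.univ.filter (fun i => w i ≠ 0)

/-- `𝓗(Y, k)`: all vectors `Y v` with `v` having at most `k` nonzero coordinates. -/
noncomputable def sparseCone {q t : ℕ} (Y : Matrix (Fin q) (Fin t) ℝ) (k : ℕ) :
    Set (Fin q → ℝ) :=
  {w | ∃ v : Fin t → ℝ, (Finset.univ.filter fun i => v i ≠ 0).card ≤ k ∧ w = Y.mulVec v}

/-- `ρ⁺_{Ψ,Y}(k)` (the `l₁ = 0` version). -/
noncomputable def rhoPlus0 {n q t : ℕ} (Ψ : Matrix (Fin n) (Fin q) ℝ)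
    (Y : Matrix (Fin q) (Fin t) ℝ) (k : ℕ) : ℝ :=
  sSup {x | ∃ w ∈ sparseCone Y k, w ≠ 0 ∧ x = vnorm (Ψ.mulVec w) ^ 2 / vnorm w ^ 2}

/-- `ρ⁻_{Ψ,Y}(k)` (the `l₁ = 0` version). -/
noncomputable def rhoMinus0 {n q t : ℕ} (Ψ : Matrix (Fin n) (Fin q) ℝ)
    (Y : Matrix (Fin q) (Fin t) ℝ) (k : ℕ) : ℝ :=
  sInf {x | ∃ w ∈ sparseCone Y k, w ≠ 0 ∧ x = vnorm (Ψ.mulVec w) ^ 2 / vnorm w ^ 2}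

/-- `ρ⁺_{Ψ,Y}(l₁, k)`. -/
noncomputable def rhoPlus {n l₁ q t : ℕ} (Ψ : Matrix (Fin n) (Fin (l₁ + q)) ℝ)
    (Y : Matrix (Fin q) (Fin t) ℝ) (k : ℕ) : ℝ :=
  sSup {x | ∃ (u : Fin l₁ → ℝ) (w : Fin q → ℝ), w ∈ sparseCone Y k ∧ Fin.append u w ≠ 0 ∧
    x = vnorm (Ψ.mulVec (Fin.append u w)) ^ 2 / vnorm (Fin.append u w) ^ 2}

/-- `ρ⁻_{Ψ,Y}(l₁, k)`. -/
noncomputable def rhoMinus {n l₁ q t : ℕ} (Ψ : Matrix (Fin n) (Fin (l₁ + q)) ℝ)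
    (Y : Matrix (Fin q) (Fin t) ℝ) (k : ℕ) : ℝ :=
  sInf {x | ∃ (u : Fin l₁ → ℝ) (w : Fin q → ℝ), w ∈ sparseCone Y k ∧ Fin.append u w ≠ 0 ∧
    x = vnorm (Ψ.mulVec (Fin.append u w)) ^ 2 / vnorm (Fin.append u w) ^ 2}

/-- Column concatenation `[P Q]`. -/
def hcat {n a b : ℕ} (P : Matrix (Fin n) (Fin a) ℝ) (Q : Matrix (Fin n) (Fin b) ℝ) :
    Matrix (Fin n) (Fin (a + b)) ℝ :=
  Matrix.of fun i => Fin.append (P i) (Q i)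

/-- Smallest singular value: `min_{‖v‖ = 1} ‖Z v‖`. -/
noncomputable def sigmaMin {m r : ℕ} (Z : Matrix (Fin m) (Fin r) ℝ) : ℝ :=
  sInf {x | ∃ v : Fin r → ℝ, vnorm v = 1 ∧ x = vnorm (Z.mulVec v)}

/-- Largest singular value: `max_{‖v‖ = 1} ‖Z v‖`. -/
noncomputable def sigmaMax {m r : ℕ} (Z : Matrix (Fin m) (Fin r) ℝ) : ℝ :=
  sSup {x | ∃ v : Fin r → ℝ, vnorm v = 1 ∧ x = vnorm (Z.mulVec v)}

/-!
Write `g = Z h`. Testing the optimality of `βhat` against `βstar` and bounding the noise term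
`⟨Xβ* - y, X h⟩ = ⟨(Z⁺)ᵀ Xᵀ (Xβ* - y), g⟩` by `λ/2 ‖g‖₁` gives the cone condition
`‖g_{T₀ᶜ}‖₁ ≤ 3 ‖g_{T₀}‖₁`. Since `Z⁺ Z = 1`, `h = a + ∑_{j ≥ 2} u_j` with `a = Z⁺ g_{T₀₁}` and
`u_j = Z⁺ g_{T_j}`, all in `𝓗(Z⁺, s + l)`; expanding `‖X h‖²` and controlling the cross terms by
`ρ⁺` yields `‖X h‖² ≥ ρ⁻ ‖a‖² - 2 ρ⁺ ‖a‖ ∑ ‖u_j‖`. Finally `‖u_j‖ ≤ σ_min(Z)⁻¹ ‖g_{T_j}‖` because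
`Z Z⁺` is an orthogonal projection, and since every entry of `g` on `T_j` is at most the average
of `|g|` on `T_{j-1}`, `∑_{j ≥ 2} ‖g_{T_j}‖ ≤ ‖g_{T₀ᶜ}‖₁ / √l ≤ 3 √(s/l) ‖g_{T₀₁}‖`.
-/

open Finset

section Norms

variable {k : ℕ}

lemma vnorm_nonneg (v : Fin k → ℝ) : 0 ≤ vnorm v := Real.sqrt_nonneg _

lemma vnorm_sq (v : Fin k → ℝ) : vnorm v ^ 2 = ∑ i, v i ^ 2 :=
  Real.sq_sqrt (sum_nonneg fun _ _ => sq_nonneg _)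

lemma dotProduct_self_eq_vnorm_sq (v : Fin k → ℝ) : v ⬝ᵥ v = vnorm v ^ 2 := by
  rw [vnorm_sq]; simp only [dotProduct, sq]

lemma vnorm_sq_pos {v : Fin k → ℝ} (hv : v ≠ 0) : 0 < vnorm v ^ 2 :=
  (sq_nonneg _).lt_of_ne fun h =>
    hv (dotProduct_self_eq_zero.mp (by rw [dotProduct_self_eq_vnorm_sq, ← h]))

lemma abs_dotProduct_le_vnorm_mul_vnorm (u v : Fin k → ℝ) : |u ⬝ᵥ v| ≤ vnorm u * vnorm v := by
  rw [← pow_le_pow_iff_left₀ (abs_nonneg _) (by positivity [vnorm_nonneg u, vnorm_nonneg v])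
    two_ne_zero, sq_abs, mul_pow, vnorm_sq, vnorm_sq]
  exact sum_mul_sq_le_sq_mul_sq univ u v

lemma vnorm_add_sq (u v : Fin k → ℝ) :
    vnorm (u + v) ^ 2 = vnorm u ^ 2 + 2 * (u ⬝ᵥ v) + vnorm v ^ 2 := by
  simp only [← dotProduct_self_eq_vnorm_sq, add_dotProduct, dotProduct_add, dotProduct_comm v u]
  ring

lemma vnorm_smul (c : ℝ) (v : Fin k → ℝ) : vnorm (c • v) = |c| * vnorm v := by
  simp only [vnorm, Pi.smul_apply, smul_eq_mul, mul_pow, ← mul_sum]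
  rw [Real.sqrt_mul (sq_nonneg c), Real.sqrt_sq_eq_abs]

lemma vnorm_mulVec_sq_le {a : ℕ} (A : Matrix (Fin a) (Fin k) ℝ) (w : Fin k → ℝ) :
    vnorm (A *ᵥ w) ^ 2 ≤ (∑ i, ∑ j, A i j ^ 2) * vnorm w ^ 2 := by
  rw [vnorm_sq, vnorm_sq, sum_mul]
  exact sum_le_sum fun i _ => sum_mul_sq_le_sq_mul_sq univ (A i) w

lemma vnorm1_nonneg (v : Fin k → ℝ) : 0 ≤ vnorm1 v := sum_nonneg fun _ _ => abs_nonneg _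

lemma abs_dotProduct_le_vnormInf_mul_vnorm1 (u v : Fin k → ℝ) :
    |u ⬝ᵥ v| ≤ vnormInf u * vnorm1 v := by
  have hu : ∀ i, |u i| ≤ vnormInf u := le_ciSup (Set.finite_range _).bddAbove
  calc |u ⬝ᵥ v| ≤ ∑ i, |u i| * |v i| :=
        (abs_sum_le_sum_abs _ _).trans_eq (by simp only [abs_mul])
    _ ≤ ∑ i, vnormInf u * |v i| := by gcongr with i; exact hu i
    _ = vnormInf u * vnorm1 v := by rw [vnorm1, mul_sum]

end Norms

section Restr

variable {k : ℕ}

lemma restr_eq_indicator (T : Finset (Fin k)) (w : Fin k → ℝ) :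
    restr T w = (T : Set (Fin k)).indicator w := by
  ext i; simp [restr, Set.indicator]

lemma restr_univ (w : Fin k → ℝ) : restr univ w = w := by
  ext i; simp [restr]

lemma restr_union {A B : Finset (Fin k)} (h : Disjoint A B) (w : Fin k → ℝ) :
    restr (A ∪ B) w = restr A w + restr B w := by
  simp only [restr_eq_indicator, coe_union]
  exact Set.indicator_union_of_disjoint (disjoint_coe.mpr h) w

lemma restr_biUnion {ι : Type*} (s : Finset ι) {T : ι → Finset (Fin k)}
    (h : (s : Set ι).PairwiseDisjoint T) (w : Fin k → ℝ) :
    restr (s.biUnion T) w = ∑ j ∈ s, restr (T j) w := by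
  ext i
  simp only [restr_eq_indicator, coe_biUnion, mem_coe, Finset.sum_apply]
  exact congrFun (indicator_biUnion s _ fun a ha b hb hab => disjoint_coe.mpr (h ha hb hab)) i

lemma vnorm1_restr (T : Finset (Fin k)) (w : Fin k → ℝ) :
    vnorm1 (restr T w) = ∑ i ∈ T, |w i| := by
  simp [vnorm1, restr, apply_ite, sum_ite_mem]

lemma vnorm_sq_restr (T : Finset (Fin k)) (w : Fin k → ℝ) :
    vnorm (restr T w) ^ 2 = ∑ i ∈ T, w i ^ 2 := by
  simp [vnorm_sq, restr, sum_ite_mem]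

lemma vnorm1_eq_vnorm1_restr_add_vnorm1_restr_compl (T : Finset (Fin k)) (w : Fin k → ℝ) :
    vnorm1 w = vnorm1 (restr T w) + vnorm1 (restr Tᶜ w) := by
  rw [vnorm1_restr, vnorm1_restr, sum_add_sum_compl, vnorm1]

lemma vnorm_restr_le_of_subset {A B : Finset (Fin k)} (hAB : A ⊆ B) (w : Fin k → ℝ) :
    vnorm (restr A w) ≤ vnorm (restr B w) := by
  rw [← pow_le_pow_iff_left₀ (vnorm_nonneg _) (vnorm_nonneg _) two_ne_zero, vnorm_sq_restr,
    vnorm_sq_restr]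
  exact sum_le_sum_of_subset_of_nonneg hAB fun i _ _ => sq_nonneg _

lemma vnorm1_restr_le_sqrt_card_mul (T : Finset (Fin k)) (w : Fin k → ℝ) :
    vnorm1 (restr T w) ≤ √(T.card : ℝ) * vnorm (restr T w) := by
  rw [← pow_le_pow_iff_left₀ (vnorm1_nonneg _) (by positivity [vnorm_nonneg (restr T w)])
    two_ne_zero, mul_pow, Real.sq_sqrt (Nat.cast_nonneg _), vnorm1_restr, vnorm_sq_restr]
  simpa [sq_abs] using sum_mul_sq_le_sq_mul_sq T (fun _ => (1 : ℝ)) (fun i => |w i|)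

lemma card_support_restr_le (T : Finset (Fin k)) (w : Fin k → ℝ) :
    (univ.filter fun i => restr T w i ≠ 0).card ≤ T.card :=
  card_le_card fun i hi => by
    by_contra hiT
    simp [restr, hiT] at hi

end Restr

section PseudoInverse

variable {m r : ℕ} {Z : Matrix (Fin m) (Fin r) ℝ}

lemma isUnit_transpose_mul_self_of_rank_eq (hZ : Z.rank = r) : IsUnit (Zᵀ * Z) := by
  rw [← linearIndependent_cols_iff_isUnit, linearIndependent_iff_card_eq_finrank_span,
    Set.finrank, ← rank_eq_finrank_span_cols, rank_transpose_mul_self, hZ, Fintype.card_fin]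

lemma pinv_mul_self_of_rank_eq (hZ : Z.rank = r) : (Zᵀ * Z)⁻¹ * Zᵀ * Z = 1 := by
  rw [Matrix.mul_assoc, nonsing_inv_mul _ ((isUnit_iff_isUnit_det _).mp
    (isUnit_transpose_mul_self_of_rank_eq hZ))]

lemma transpose_mul_self_mul_pinv_of_rank_eq (hZ : Z.rank = r) :
    Zᵀ * Z * ((Zᵀ * Z)⁻¹ * Zᵀ) = Zᵀ :=
  mul_nonsing_inv_cancel_left _ _ ((isUnit_iff_isUnit_det _).mp
    (isUnit_transpose_mul_self_of_rank_eq hZ))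

lemma sigmaMin_nonneg (Z : Matrix (Fin m) (Fin r) ℝ) : 0 ≤ sigmaMin Z :=
  Real.sInf_nonneg fun _ ⟨_, _, hx⟩ => hx ▸ vnorm_nonneg _

lemma sigmaMin_pos_of_mul_eq_one [Nonempty (Fin r)] {P : Matrix (Fin r) (Fin m) ℝ}
    (hPZ : P * Z = 1) : 0 < sigmaMin Z := by
  set F := ∑ i, ∑ j, P i j ^ 2
  have hlow : (1 + F)⁻¹ ≤ sigmaMin Z := by
    refine le_csInf ?_ ?_
    · obtain ⟨i⟩ := ‹Nonempty (Fin r)›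
      exact ⟨_, Pi.single i 1, by simp [vnorm, sq, Pi.single_apply], rfl⟩
    · rintro x ⟨v, hv, rfl⟩
      -- `P` undoes `Z`, so `1 = ‖P (Z v)‖² ≤ F ‖Z v‖²`
      have hF : 1 ≤ F * vnorm (Z *ᵥ v) ^ 2 := by
        have := vnorm_mulVec_sq_le P (Z *ᵥ v)
        rwa [mulVec_mulVec, hPZ, one_mulVec, hv, one_pow] at this
      rw [inv_le_iff_one_le_mul₀ (by positivity)]
      nlinarith [vnorm_nonneg (Z *ᵥ v), show 0 ≤ F by positivity]
  exact lt_of_lt_of_le (by positivity) hlow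

lemma sigmaMin_mul_vnorm_le (Z : Matrix (Fin m) (Fin r) ℝ) (v : Fin r → ℝ) :
    sigmaMin Z * vnorm v ≤ vnorm (Z *ᵥ v) := by
  rcases (vnorm_nonneg v).eq_or_lt with hv | hv
  · rw [← hv, mul_zero]; exact vnorm_nonneg _
  have hunit : vnorm ((vnorm v)⁻¹ • v) = 1 := by
    rw [vnorm_smul, abs_of_pos (inv_pos.mpr hv), inv_mul_cancel₀ hv.ne']
  have hle : sigmaMin Z ≤ vnorm (Z *ᵥ ((vnorm v)⁻¹ • v)) :=
    csInf_le ⟨0, fun _ ⟨_, _, hx⟩ => hx ▸ vnorm_nonneg _⟩ ⟨_, hunit, rfl⟩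
  rwa [mulVec_smul, vnorm_smul, abs_of_pos (inv_pos.mpr hv), ← div_eq_inv_mul,
    le_div_iff₀ hv] at hle

/-- `Z P` is the orthogonal projection onto the range of `Z`, hence a contraction. -/
lemma vnorm_mulVec_mulVec_le_of_normal_eq {P : Matrix (Fin r) (Fin m) ℝ}
    (hZP : Zᵀ * Z * P = Zᵀ) (w : Fin m → ℝ) : vnorm (Z *ᵥ (P *ᵥ w)) ≤ vnorm w := by
  set u := Z *ᵥ (P *ᵥ w)
  have hu : vnorm u ^ 2 = u ⬝ᵥ w := by
    rw [← dotProduct_self_eq_vnorm_sq, dotProduct_mulVec, ← mulVec_transpose, mulVec_mulVec,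
      mulVec_mulVec, hZP, mulVec_transpose, ← dotProduct_mulVec, dotProduct_comm]
  have hcs := (le_abs_self _).trans (abs_dotProduct_le_vnorm_mul_vnorm u w)
  nlinarith [vnorm_nonneg u, vnorm_nonneg w]

lemma vnorm_mulVec_le_inv_sigmaMin_mul {P : Matrix (Fin r) (Fin m) ℝ} (hPZ : P * Z = 1)
    (hZP : Zᵀ * Z * P = Zᵀ) (w : Fin m → ℝ) :
    vnorm (P *ᵥ w) ≤ (sigmaMin Z)⁻¹ * vnorm w := by
  by_cases hr : IsEmpty (Fin r)
  · rw [Subsingleton.elim (P *ᵥ w) 0, vnorm, univ_eq_empty]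
    simpa using mul_nonneg (inv_nonneg.mpr (sigmaMin_nonneg Z)) (vnorm_nonneg w)
  rw [not_isEmpty_iff] at hr
  rw [le_inv_mul_iff₀ (sigmaMin_pos_of_mul_eq_one hPZ)]
  exact (sigmaMin_mul_vnorm_le Z _).trans (vnorm_mulVec_mulVec_le_of_normal_eq hZP w)

end PseudoInverse

section Rho

variable {n q t : ℕ} (Ψ : Matrix (Fin n) (Fin q) ℝ) {Y : Matrix (Fin q) (Fin t) ℝ} {k : ℕ}

lemma mulVec_restr_mem_sparseCone {T : Finset (Fin t)} (hT : T.card ≤ k) (v : Fin t → ℝ) :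
    Y *ᵥ restr T v ∈ sparseCone Y k :=
  ⟨restr T v, (card_support_restr_le T v).trans hT, rfl⟩

lemma rhoPlus0_nonneg : 0 ≤ rhoPlus0 Ψ Y k :=
  Real.sSup_nonneg fun _ ⟨_, _, _, hx⟩ => hx ▸ by positivity

lemma rhoMinus0_mul_le {w : Fin q → ℝ} (hw : w ∈ sparseCone Y k) :
    rhoMinus0 Ψ Y k * vnorm w ^ 2 ≤ vnorm (Ψ *ᵥ w) ^ 2 := by
  rcases eq_or_ne w 0 with rfl | hw0
  · simp [vnorm]
  rw [← le_div_iff₀ (vnorm_sq_pos hw0)]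
  exact csInf_le ⟨0, fun _ ⟨_, _, _, hx⟩ => hx ▸ by positivity⟩ ⟨w, hw, hw0, rfl⟩

lemma vnorm_mulVec_sq_le_rhoPlus0_mul {w : Fin q → ℝ} (hw : w ∈ sparseCone Y k) :
    vnorm (Ψ *ᵥ w) ^ 2 ≤ rhoPlus0 Ψ Y k * vnorm w ^ 2 := by
  rcases eq_or_ne w 0 with rfl | hw0
  · simp [vnorm]
  rw [← div_le_iff₀ (vnorm_sq_pos hw0)]
  refine le_csSup ⟨∑ i, ∑ j, Ψ i j ^ 2, fun _ ⟨v, _, hv0, hx⟩ => ?_⟩ ⟨w, hw, hw0, rfl⟩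
  rw [hx, div_le_iff₀ (vnorm_sq_pos hv0)]
  exact vnorm_mulVec_sq_le Ψ v

lemma abs_dotProduct_mulVec_le_rhoPlus0_mul {a u : Fin q → ℝ} (ha : a ∈ sparseCone Y k)
    (hu : u ∈ sparseCone Y k) :
    |(Ψ *ᵥ a) ⬝ᵥ (Ψ *ᵥ u)| ≤ rhoPlus0 Ψ Y k * vnorm a * vnorm u := by
  have hbound : ∀ w ∈ sparseCone Y k, vnorm (Ψ *ᵥ w) ≤ √(rhoPlus0 Ψ Y k) * vnorm w := by
    intro w hw
    rw [← pow_le_pow_iff_left₀ (vnorm_nonneg _) (by positivity [vnorm_nonneg w]) two_ne_zero,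
      mul_pow, Real.sq_sqrt (rhoPlus0_nonneg Ψ)]
    exact vnorm_mulVec_sq_le_rhoPlus0_mul Ψ hw
  calc |(Ψ *ᵥ a) ⬝ᵥ (Ψ *ᵥ u)| ≤ vnorm (Ψ *ᵥ a) * vnorm (Ψ *ᵥ u) :=
        abs_dotProduct_le_vnorm_mul_vnorm _ _
    _ ≤ (√(rhoPlus0 Ψ Y k) * vnorm a) * (√(rhoPlus0 Ψ Y k) * vnorm u) :=
        mul_le_mul (hbound a ha) (hbound u hu) (vnorm_nonneg _) (by positivity [vnorm_nonneg a])
    _ = rhoPlus0 Ψ Y k * vnorm a * vnorm u := by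
        rw [mul_mul_mul_comm, Real.mul_self_sqrt (rhoPlus0_nonneg Ψ), mul_assoc]

lemma rhoMinus0_mul_sub_le_vnorm_mulVec_add_sum {ι : Type*} (s : Finset ι) {a : Fin q → ℝ}
    {u : ι → Fin q → ℝ} (ha : a ∈ sparseCone Y k) (hu : ∀ j ∈ s, u j ∈ sparseCone Y k) :
    rhoMinus0 Ψ Y k * vnorm a ^ 2 - 2 * (rhoPlus0 Ψ Y k * vnorm a * ∑ j ∈ s, vnorm (u j)) ≤
      vnorm (Ψ *ᵥ (a + ∑ j ∈ s, u j)) ^ 2 := by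
  have hcross : |(Ψ *ᵥ a) ⬝ᵥ (Ψ *ᵥ ∑ j ∈ s, u j)| ≤
      rhoPlus0 Ψ Y k * vnorm a * ∑ j ∈ s, vnorm (u j) := by
    rw [mulVec_sum, dotProduct_sum, mul_sum]
    exact (abs_sum_le_sum_abs _ _).trans
      (sum_le_sum fun j hj => abs_dotProduct_mulVec_le_rhoPlus0_mul Ψ ha (hu j hj))
  rw [mulVec_add, vnorm_add_sq]
  nlinarith [rhoMinus0_mul_le Ψ ha, neg_abs_le ((Ψ *ᵥ a) ⬝ᵥ (Ψ *ᵥ ∑ j ∈ s, u j)),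
    sq_nonneg (vnorm (Ψ *ᵥ ∑ j ∈ s, u j))]

end Rho

section Cone

variable {m : ℕ}

lemma vnorm1_sub_vnorm1_add_le {T : Finset (Fin m)} {b : Fin m → ℝ} (hb : ∀ i ∉ T, b i = 0)
    (g : Fin m → ℝ) :
    vnorm1 b - vnorm1 (b + g) ≤ vnorm1 (restr T g) - vnorm1 (restr Tᶜ g) := by
  rw [vnorm1_eq_vnorm1_restr_add_vnorm1_restr_compl T b,
    vnorm1_eq_vnorm1_restr_add_vnorm1_restr_compl T (b + g)]
  simp only [vnorm1_restr, Pi.add_apply]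
  have hT : ∑ i ∈ T, |b i| - ∑ i ∈ T, |b i + g i| ≤ ∑ i ∈ T, |g i| := by
    rw [← sum_sub_distrib]
    exact sum_le_sum fun i _ => by simpa using abs_sub_abs_le_abs_sub (b i) (b i + g i)
  have hb0 : ∑ i ∈ Tᶜ, |b i| = 0 :=
    sum_eq_zero fun i hi => by rw [hb i (mem_compl.mp hi), abs_zero]
  have hbg : ∑ i ∈ Tᶜ, |b i + g i| = ∑ i ∈ Tᶜ, |g i| :=
    sum_congr rfl fun i hi => by rw [hb i (mem_compl.mp hi), zero_add]
  linarith

variable {n r : ℕ}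

theorem vnorm1_restr_compl_le_three_mul_vnorm1_restr (X : Matrix (Fin n) (Fin r) ℝ)
    {Z : Matrix (Fin m) (Fin r) ℝ} {P : Matrix (Fin r) (Fin m) ℝ} (hPZ : P * Z = 1)
    (y : Fin n → ℝ) {lam : ℝ} (hlam : 0 < lam) {βstar βhat : Fin r → ℝ}
    (hopt : (1 / 2) * vnorm (X *ᵥ βhat - y) ^ 2 + lam * vnorm1 (Z *ᵥ βhat) ≤
      (1 / 2) * vnorm (X *ᵥ βstar - y) ^ 2 + lam * vnorm1 (Z *ᵥ βstar))
    {T₀ : Finset (Fin m)} (hT₀ : ∀ i ∉ T₀, (Z *ᵥ βstar) i = 0)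
    (hfeas : vnormInf (Pᵀ *ᵥ (Xᵀ *ᵥ (X *ᵥ βstar - y))) < lam / 2) :
    vnorm1 (restr T₀ᶜ (Z *ᵥ (βhat - βstar))) ≤ 3 * vnorm1 (restr T₀ (Z *ᵥ (βhat - βstar))) := by
  set h := βhat - βstar
  set e := X *ᵥ βstar - y
  set g := Z *ᵥ h
  have hβhat : βhat = βstar + h := by simp [h]
  have hnoise : -(lam / 2 * vnorm1 g) ≤ e ⬝ᵥ (X *ᵥ h) := by
    have hdot : e ⬝ᵥ (X *ᵥ h) = (Pᵀ *ᵥ (Xᵀ *ᵥ e)) ⬝ᵥ g := by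
      rw [← one_mulVec h, ← hPZ, ← mulVec_mulVec, dotProduct_mulVec, dotProduct_mulVec,
        mulVec_transpose, mulVec_transpose]
    refine neg_le_of_abs_le (hdot ▸ (abs_dotProduct_le_vnormInf_mul_vnorm1 _ _).trans ?_)
    exact mul_le_mul_of_nonneg_right hfeas.le (vnorm1_nonneg g)
  have hl1 := vnorm1_sub_vnorm1_add_le hT₀ g
  rw [hβhat, mulVec_add, mulVec_add, add_sub_right_comm, vnorm_add_sq] at hopt
  rw [vnorm1_eq_vnorm1_restr_add_vnorm1_restr_compl T₀ g] at hnoise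
  nlinarith [sq_nonneg (vnorm (X *ᵥ h))]

end Cone

section Blocks

variable {m : ℕ}

lemma vnorm_restr_le_vnorm1_restr_div_sqrt {A B : Finset (Fin m)} {l : ℕ} (hl : 0 < l)
    (hA : A.card ≤ l) (hB : B.card = l) {g : Fin m → ℝ} (hAB : ∀ a ∈ A, ∀ b ∈ B, |g a| ≤ |g b|) :
    vnorm (restr A g) ≤ vnorm1 (restr B g) / √l := by
  set S := vnorm1 (restr B g) with hS
  have hl' : (0 : ℝ) < l := Nat.cast_pos.mpr hl
  have havg : ∀ a ∈ A, |g a| ≤ S / l := by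
    intro a ha
    rw [le_div_iff₀ hl', hS, vnorm1_restr]
    calc |g a| * l = ∑ _b ∈ B, |g a| := by rw [sum_const, hB, nsmul_eq_mul, mul_comm]
      _ ≤ ∑ b ∈ B, |g b| := sum_le_sum fun b hb => hAB a ha b hb
  rw [← pow_le_pow_iff_left₀ (vnorm_nonneg _) (div_nonneg (vnorm1_nonneg _) (Real.sqrt_nonneg _))
    two_ne_zero, div_pow, Real.sq_sqrt hl'.le, vnorm_sq_restr]
  calc ∑ i ∈ A, g i ^ 2 ≤ ∑ _i ∈ A, (S / l) ^ 2 :=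
        sum_le_sum fun i hi => by
          rw [← sq_abs]; exact pow_le_pow_left₀ (abs_nonneg _) (havg i hi) 2
    _ = A.card * (S / l) ^ 2 := by rw [sum_const, nsmul_eq_mul]
    _ ≤ l * (S / l) ^ 2 := by gcongr
    _ = S ^ 2 / l := by field_simp

lemma card_le_of_mem_Icc {T : ℕ → Finset (Fin m)} {J l : ℕ}
    (hCard : ∀ j, 1 ≤ j → j < J → (T j).card = l) (hCardLast : (T J).card ≤ l) {j : ℕ}
    (hj : j ∈ Icc 1 J) : (T j).card ≤ l := by
  obtain ⟨h1, h2⟩ := mem_Icc.mp hj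
  exact h2.eq_or_lt.elim (fun h => h ▸ hCardLast) fun h => (hCard j h1 h).le

lemma sum_vnorm_restr_Ioc_le {T : ℕ → Finset (Fin m)} {J l : ℕ} (hl : 0 < l)
    (hCard : ∀ j, 1 ≤ j → j < J → (T j).card = l) (hCardLast : (T J).card ≤ l)
    {g : Fin m → ℝ} (hOrder : ∀ j, 2 ≤ j → j ≤ J → ∀ a ∈ T j, ∀ b ∈ T (j - 1), |g a| ≤ |g b|) :
    ∑ j ∈ Ioc 1 J, vnorm (restr (T j) g) ≤ (∑ j ∈ Icc 1 J, vnorm1 (restr (T j) g)) / √l := by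
  rw [sum_div]
  calc ∑ j ∈ Ioc 1 J, vnorm (restr (T j) g)
      ≤ ∑ j ∈ Ioc 1 J, vnorm1 (restr (T (j - 1)) g) / √l :=
        sum_le_sum fun j hj => by
          obtain ⟨h1, h2⟩ := mem_Ioc.mp hj
          exact vnorm_restr_le_vnorm1_restr_div_sqrt hl
            (card_le_of_mem_Icc hCard hCardLast (mem_Icc.mpr ⟨h1.le, h2⟩))
            (hCard (j - 1) (by omega) (by omega)) (hOrder j h1 h2)
    _ = ∑ j ∈ (Ioc 1 J).image (· - 1), vnorm1 (restr (T j) g) / √l :=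
        (sum_image (f := fun j => vnorm1 (restr (T j) g) / √l) fun a ha b hb hab => by
          rw [mem_coe, mem_Ioc] at ha hb; omega).symm
    _ ≤ ∑ j ∈ Icc 1 J, vnorm1 (restr (T j) g) / √l :=
        sum_le_sum_of_subset_of_nonneg
          (fun j hj => by simp only [mem_image, mem_Ioc, mem_Icc] at hj ⊢; omega)
          fun _ _ _ => div_nonneg (vnorm1_nonneg _) (Real.sqrt_nonneg _)

lemma restr_union_add_sum_Ioc {T₀ : Finset (Fin m)} {T : ℕ → Finset (Fin m)} {J : ℕ}
    (hJ : 1 ≤ J) (hUnion : (Icc 1 J).biUnion T = T₀ᶜ)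
    (hDisj : (Icc 1 J : Set ℕ).PairwiseDisjoint T) (g : Fin m → ℝ) :
    restr (T₀ ∪ T 1) g + ∑ j ∈ Ioc 1 J, restr (T j) g = g := by
  have hT1 : Disjoint T₀ (T 1) := disjoint_of_subset_right
    (hUnion ▸ subset_biUnion_of_mem T (mem_Icc.mpr ⟨le_rfl, hJ⟩)) disjoint_compl_right
  calc restr (T₀ ∪ T 1) g + ∑ j ∈ Ioc 1 J, restr (T j) g
      = restr T₀ g + ∑ j ∈ Icc 1 J, restr (T j) g := by
        rw [restr_union hT1, Icc_eq_cons_Ioc hJ, sum_cons, add_assoc]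
    _ = restr T₀ g + restr T₀ᶜ g := by rw [← restr_biUnion _ hDisj, hUnion]
    _ = g := by rw [← restr_union disjoint_compl_right, union_compl, restr_univ]

theorem sum_vnorm_restr_Ioc_le_of_cone {T₀ : Finset (Fin m)} {T : ℕ → Finset (Fin m)}
    {J l : ℕ} (hl : 0 < l) (hUnion : (Icc 1 J).biUnion T = T₀ᶜ)
    (hDisj : (Icc 1 J : Set ℕ).PairwiseDisjoint T)
    (hCard : ∀ j, 1 ≤ j → j < J → (T j).card = l) (hCardLast : (T J).card ≤ l)
    {g : Fin m → ℝ} (hOrder : ∀ j, 2 ≤ j → j ≤ J → ∀ a ∈ T j, ∀ b ∈ T (j - 1), |g a| ≤ |g b|)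
    (hcone : vnorm1 (restr T₀ᶜ g) ≤ 3 * vnorm1 (restr T₀ g)) :
    ∑ j ∈ Ioc 1 J, vnorm (restr (T j) g) ≤
      3 * √((T₀.card : ℝ) / l) * vnorm (restr (T₀ ∪ T 1) g) := by
  have hblocks : ∑ j ∈ Icc 1 J, vnorm1 (restr (T j) g) = vnorm1 (restr T₀ᶜ g) := by
    rw [vnorm1_restr, ← hUnion, sum_biUnion hDisj]
    exact sum_congr rfl fun j _ => vnorm1_restr _ g
  calc ∑ j ∈ Ioc 1 J, vnorm (restr (T j) g)
      ≤ vnorm1 (restr T₀ᶜ g) / √l := hblocks ▸ sum_vnorm_restr_Ioc_le hl hCard hCardLast hOrder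
    _ ≤ 3 * (√(T₀.card : ℝ) * vnorm (restr T₀ g)) / √l := by
        gcongr
        exact hcone.trans (by gcongr; exact vnorm1_restr_le_sqrt_card_mul T₀ g)
    _ ≤ 3 * (√(T₀.card : ℝ) * vnorm (restr (T₀ ∪ T 1) g)) / √l := by
        gcongr; exact vnorm_restr_le_of_subset subset_union_left g
    _ = 3 * √((T₀.card : ℝ) / l) * vnorm (restr (T₀ ∪ T 1) g) := by
        rw [Real.sqrt_div (Nat.cast_nonneg _)]; ring

end Blocks

theorem statement3_general {n r m : ℕ}
    (X : Matrix (Fin n) (Fin r) ℝ) (Z : Matrix (Fin m) (Fin r) ℝ)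
    (hZrank : Z.rank = r)
    (Zp : Matrix (Fin r) (Fin m) ℝ) (hZp : Zp = (Zᵀ * Z)⁻¹ * Zᵀ)
    (y : Fin n → ℝ) (lam : ℝ) (hlam : 0 < lam)
    (βstar βhat : Fin r → ℝ)
    (hmin : ∀ β : Fin r → ℝ,
      (1 / 2) * vnorm (X.mulVec βhat - y) ^ 2 + lam * vnorm1 (Z.mulVec βhat) ≤
        (1 / 2) * vnorm (X.mulVec β - y) ^ 2 + lam * vnorm1 (Z.mulVec β))
    (h : Fin r → ℝ) (hh : h = βhat - βstar)
    (T₀ : Finset (Fin m)) (hT₀ : T₀ = suppSet (Z.mulVec βstar))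
    (s : ℕ) (hs : s = T₀.card)
    (hfeas : vnormInf (Zpᵀ.mulVec (Xᵀ.mulVec (X.mulVec βstar - y))) < lam / 2)
    -- the block partition of `T₀ᶜ` into `T 1, …, T J`
    (l : ℕ) (hl : 0 < l) (J : ℕ) (hJ : 1 ≤ J) (T : ℕ → Finset (Fin m))
    (hUnion : (Finset.Icc 1 J).biUnion T = T₀ᶜ)
    (hDisj : ∀ i ∈ Finset.Icc 1 J, ∀ j ∈ Finset.Icc 1 J, i ≠ j → Disjoint (T i) (T j))
    (hCard : ∀ j, 1 ≤ j → j < J → (T j).card = l)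
    (hCardLast : (T J).card ≤ l)
    (hOrder : ∀ j, 2 ≤ j → j ≤ J → ∀ a ∈ T j, ∀ b ∈ T (j - 1),
      |Z.mulVec h a| ≤ |Z.mulVec h b|)
    (T01 : Finset (Fin m)) (hT01 : T01 = T₀ ∪ T 1) :
    vnorm (X.mulVec h) ^ 2 ≥
      rhoMinus0 X Zp (s + l) * vnorm (Zp.mulVec (restr T01 (Z.mulVec h))) ^ 2 -
        (6 * (sigmaMin Z)⁻¹ * rhoPlus0 X Zp (s + l) * Real.sqrt ((s : ℝ) / (l : ℝ))) *
          vnorm (Zp.mulVec (restr T01 (Z.mulVec h))) * vnorm (restr T01 (Z.mulVec h)) := by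
  have hPZ : Zp * Z = 1 := hZp ▸ pinv_mul_self_of_rank_eq hZrank
  have hZP : Zᵀ * Z * Zp = Zᵀ := hZp ▸ transpose_mul_self_mul_pinv_of_rank_eq hZrank
  have hDisj' : (Icc 1 J : Set ℕ).PairwiseDisjoint T := fun i hi j hj => hDisj i hi j hj
  have hcone : vnorm1 (restr T₀ᶜ (Z *ᵥ h)) ≤ 3 * vnorm1 (restr T₀ (Z *ᵥ h)) :=
    hh ▸ vnorm1_restr_compl_le_three_mul_vnorm1_restr X hPZ y hlam (hmin βstar)
      (fun i hi => by simpa [hT₀, suppSet] using hi) hfeas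
  have hdecomp : h = Zp *ᵥ restr T01 (Z *ᵥ h) + ∑ j ∈ Ioc 1 J, Zp *ᵥ restr (T j) (Z *ᵥ h) := by
    rw [← mulVec_sum, ← mulVec_add, hT01, restr_union_add_sum_Ioc hJ hUnion hDisj',
      mulVec_mulVec, hPZ, one_mulVec]
  have hcardT : ∀ j ∈ Icc 1 J, (T j).card ≤ l :=
    fun _ hj => card_le_of_mem_Icc hCard hCardLast hj
  have hcardT01 : T01.card ≤ s + l :=
    hT01 ▸ hs ▸ (card_union_le _ _).trans (by gcongr; exact hcardT 1 (mem_Icc.mpr ⟨le_rfl, hJ⟩))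
  have hexpand := rhoMinus0_mul_sub_le_vnorm_mulVec_add_sum X (Ioc 1 J)
    (mulVec_restr_mem_sparseCone (Y := Zp) hcardT01 (Z *ᵥ h)) fun j hj =>
      mulVec_restr_mem_sparseCone (Y := Zp)
        ((hcardT j (Ioc_subset_Icc_self hj)).trans (by omega)) (Z *ᵥ h)
  have htail : ∑ j ∈ Ioc 1 J, vnorm (Zp *ᵥ restr (T j) (Z *ᵥ h)) ≤
      (sigmaMin Z)⁻¹ * (3 * √((s : ℝ) / l) * vnorm (restr T01 (Z *ᵥ h))) := by
    refine (sum_le_sum fun j _ => vnorm_mulVec_le_inv_sigmaMin_mul hPZ hZP _).trans ?_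
    rw [← mul_sum, hs, hT01]
    exact mul_le_mul_of_nonneg_left
      (sum_vnorm_restr_Ioc_le_of_cone hl hUnion hDisj' hCard hCardLast hOrder hcone)
      (inv_nonneg.mpr (sigmaMin_nonneg Z))
  rw [← hdecomp] at hexpand
  refine le_trans ?_ hexpand
  have hcross := mul_le_mul_of_nonneg_left htail
    (mul_nonneg (rhoPlus0_nonneg X (Y := Zp) (k := s + l))
      (vnorm_nonneg (Zp *ᵥ restr T01 (Z *ᵥ h))))
  linarith

/-- In the simplified dictionary-LASSO setting with the block partition,
`‖Xh‖² ≥ W_{Xh,1}‖Z⁺(Zh)_{T₀₁}‖² − W_{Xh,2}‖Z⁺(Zh)_{T₀₁}‖·‖(Zh)_{T₀₁}‖`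
where `W_{Xh,1} = ρ⁻_{X,Z⁺}(s+l)`, `W_{Xh,2} = 6σ_min(Z)⁻¹ρ⁺_{X,Z⁺}(s+l)√(s/l)`,
and `T₀₁ = T₀ ∪ T₁`. -/
theorem statement3 {n r m : ℕ} (hn : 0 < n) (hr : 0 < r) (hm : 0 < m)
    (X : Matrix (Fin n) (Fin r) ℝ) (Z : Matrix (Fin m) (Fin r) ℝ)
    (hZrank : Z.rank = r)
    (Zp : Matrix (Fin r) (Fin m) ℝ) (hZp : Zp = (Zᵀ * Z)⁻¹ * Zᵀ)
    (y : Fin n → ℝ) (lam : ℝ) (hlam : 0 < lam)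
    (βstar βhat : Fin r → ℝ)
    (hmin : ∀ β : Fin r → ℝ,
      (1 / 2) * vnorm (X.mulVec βhat - y) ^ 2 + lam * vnorm1 (Z.mulVec βhat) ≤
        (1 / 2) * vnorm (X.mulVec β - y) ^ 2 + lam * vnorm1 (Z.mulVec β))
    (h : Fin r → ℝ) (hh : h = βhat - βstar)
    (T₀ : Finset (Fin m)) (hT₀ : T₀ = suppSet (Z.mulVec βstar))
    (s : ℕ) (hs : s = T₀.card) (hs1 : 1 ≤ s)
    (hfeas : vnormInf (Zpᵀ.mulVec (Xᵀ.mulVec (X.mulVec βstar - y))) < lam / 2)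
    -- the block partition of `T₀ᶜ` into `T 1, …, T J`
    (l : ℕ) (hl : 0 < l) (J : ℕ) (hJ : 1 ≤ J) (T : ℕ → Finset (Fin m))
    (hUnion : (Finset.Icc 1 J).biUnion T = T₀ᶜ)
    (hDisj : ∀ i ∈ Finset.Icc 1 J, ∀ j ∈ Finset.Icc 1 J, i ≠ j → Disjoint (T i) (T j))
    (hCard : ∀ j, 1 ≤ j → j < J → (T j).card = l)
    (hCardLast : (T J).card ≤ l)
    (hOrder : ∀ j, 2 ≤ j → j ≤ J → ∀ a ∈ T j, ∀ b ∈ T (j - 1),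
      |Z.mulVec h a| ≤ |Z.mulVec h b|)
    (T01 : Finset (Fin m)) (hT01 : T01 = T₀ ∪ T 1) :
    vnorm (X.mulVec h) ^ 2 ≥
      rhoMinus0 X Zp (s + l) * vnorm (Zp.mulVec (restr T01 (Z.mulVec h))) ^ 2 -
        (6 * (sigmaMin Z)⁻¹ * rhoPlus0 X Zp (s + l) * Real.sqrt ((s : ℝ) / (l : ℝ))) *
          vnorm (Zp.mulVec (restr T01 (Z.mulVec h))) * vnorm (restr T01 (Z.mulVec h)) :=
  statement3_general X Z hZrank Zp hZp y lam hlam βstar βhat hmin h hh T₀ hT₀ s hs hfeas l hl J hJ T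
    hUnion hDisj hCard hCardLast hOrder T01 hT01
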